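/- Let N be a nonzero integer. The operators X̂ and Ŷ map smooth N-quasi-periodic functions φ : ℝ² → ℂ to N-quasi-periodic functions, and they satisfy the Heisenberg commutation relation X̂(Ŷφ) − Ŷ(X̂φ) = −(N/(2πi))·φ for every smooth φ : ℝ² → ℂ; thus X̂, Ŷ, and the scalar Ẑ = −N/(2πi) provide a representation of the Heisenberg algebra h(2) on the sections of the prequantum line bundle L_N. -/

import Mathlib

noncomputable section

/-- Partial derivative in the first variable. -/
def pdx (φ : ℝ × ℝ → ℂ) (p : ℝ × ℝ) : ℂ := fderiv ℝ φ p (1, 0)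

/-- Partial derivative in the second variable. -/
def pdy (φ : ℝ × ℝ → ℂ) (p : ℝ × ℝ) : ℂ := fderiv ℝ φ p (0, 1)

/-- The operator `X̂ = (1/2πi)(∂/∂y − 2πiNx)`. -/
def Xhat (N : ℤ) (φ : ℝ × ℝ → ℂ) : ℝ × ℝ → ℂ := fun p =>
  (1 / (2 * (Real.pi : ℂ) * Complex.I)) *
    (pdy φ p - 2 * (Real.pi : ℂ) * Complex.I * (N : ℂ) * (p.1 : ℂ) * φ p)

/-- The operator `Ŷ = −(1/2πi) ∂/∂x`. -/
def Yhat (φ : ℝ × ℝ → ℂ) : ℝ × ℝ → ℂ := fun p =>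
  -(1 / (2 * (Real.pi : ℂ) * Complex.I)) * pdx φ p

/-- `N`-quasi-periodicity: identified with sections of the prequantum bundle `L_N`. -/
def QuasiPeriodic (N : ℤ) (φ : ℝ × ℝ → ℂ) : Prop :=
  ∀ (m n : ℤ) (x y : ℝ),
    φ (x + m, y + n) =
      Complex.exp (2 * (Real.pi : ℂ) * Complex.I * (N : ℂ) * (m : ℂ) * (y : ℂ)) * φ (x, y)

open Complex

/-- Evaluation of the derivative in direction `v` has derivative given by the flipped
second derivative. -/
lemma hasFDerivAt_pd (φ : ℝ × ℝ → ℂ) (hφ : ContDiff ℝ (⊤ : ℕ∞) φ) (p : ℝ × ℝ) (v : ℝ × ℝ) :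
    HasFDerivAt (fun q => fderiv ℝ φ q v) ((fderiv ℝ (fderiv ℝ φ) p).flip v) p := by
  have h : HasFDerivAt (fderiv ℝ φ) (fderiv ℝ (fderiv ℝ φ) p) p :=
    ((hφ.fderiv_right (m := 1) (WithTop.coe_le_coe.mpr le_top)).differentiable one_ne_zero p).hasFDerivAt
  have h2 := (ContinuousLinearMap.apply ℝ ℂ v).hasFDerivAt.comp p h
  have e : (fderiv ℝ (fderiv ℝ φ) p).flip v
      = (ContinuousLinearMap.apply ℝ ℂ v).comp (fderiv ℝ (fderiv ℝ φ) p) :=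
    ContinuousLinearMap.ext fun w => rfl
  rw [e]
  exact h2

/-- The real-coordinate function `p ↦ (p.1 : ℂ)`. -/
lemma hasFDerivAt_coord1 (p : ℝ × ℝ) :
    HasFDerivAt (fun q : ℝ × ℝ => (q.1 : ℂ))
      (Complex.ofRealCLM.comp (ContinuousLinearMap.fst ℝ ℝ ℝ)) p :=
  Complex.ofRealCLM.hasFDerivAt.comp p hasFDerivAt_fst

/-- The key translation identity for derivatives of quasi-periodic functions. -/
lemma qp_deriv (N : ℤ) (φ : ℝ × ℝ → ℂ) (hφ : ContDiff ℝ (⊤ : ℕ∞) φ) (hqp : QuasiPeriodic N φ)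
    (m n : ℤ) (x y : ℝ) :
    pdx φ (x + m, y + n) =
        Complex.exp (2 * (Real.pi : ℂ) * Complex.I * (N : ℂ) * (m : ℂ) * (y : ℂ)) *
          pdx φ (x, y) ∧
    pdy φ (x + m, y + n) =
        Complex.exp (2 * (Real.pi : ℂ) * Complex.I * (N : ℂ) * (m : ℂ) * (y : ℂ)) *
          (pdy φ (x, y) +
            2 * (Real.pi : ℂ) * Complex.I * (N : ℂ) * (m : ℂ) * φ (x, y)) := by
  set K : ℂ := 2 * (Real.pi : ℂ) * Complex.I * (N : ℂ) * (m : ℂ) with hK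
  have hdφ : Differentiable ℝ φ := hφ.differentiable (by simp)
  -- left side: translate
  have hL : HasFDerivAt (fun q : ℝ × ℝ => φ (q + ((m : ℝ), (n : ℝ))))
      (fderiv ℝ φ ((x, y) + ((m : ℝ), (n : ℝ)))) (x, y) := by
    have h1 : HasFDerivAt (fun q : ℝ × ℝ => q + ((m : ℝ), (n : ℝ)))
        (ContinuousLinearMap.id ℝ (ℝ × ℝ)) (x, y) := (hasFDerivAt_id _).add_const _
    have h2 := (hdφ ((x, y) + ((m : ℝ), (n : ℝ)))).hasFDerivAt.comp (x, y) h1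
    rw [ContinuousLinearMap.comp_id] at h2
    exact h2
  -- the exponential factor
  have hE : HasFDerivAt (fun q : ℝ × ℝ => Complex.exp (K * (q.2 : ℂ)))
      (Complex.exp (K * ((y : ℝ) : ℂ)) •
        (K • (Complex.ofRealCLM.comp (ContinuousLinearMap.snd ℝ ℝ ℝ)))) (x, y) := by
    have h0 : HasFDerivAt (fun q : ℝ × ℝ => ((q.2 : ℝ) : ℂ))
        (Complex.ofRealCLM.comp (ContinuousLinearMap.snd ℝ ℝ ℝ)) (x, y) :=
      Complex.ofRealCLM.hasFDerivAt.comp _ hasFDerivAt_snd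
    exact (h0.const_mul K).cexp
  -- right side: product
  have hR : HasFDerivAt (fun q : ℝ × ℝ => Complex.exp (K * (q.2 : ℂ)) * φ q)
      (Complex.exp (K * ((y : ℝ) : ℂ)) • fderiv ℝ φ (x, y) +
        φ (x, y) • (Complex.exp (K * ((y : ℝ) : ℂ)) •
          (K • (Complex.ofRealCLM.comp (ContinuousLinearMap.snd ℝ ℝ ℝ))))) (x, y) :=
    hE.mul (hdφ (x, y)).hasFDerivAt
  -- the two functions coincide
  have hfun : (fun q : ℝ × ℝ => φ (q + ((m : ℝ), (n : ℝ))))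
      = fun q : ℝ × ℝ => Complex.exp (K * (q.2 : ℂ)) * φ q := by
    funext q
    have := hqp m n q.1 q.2
    rw [show q + ((m : ℝ), (n : ℝ)) = (q.1 + m, q.2 + n) from rfl]
    simpa [hK, mul_comm, mul_assoc, mul_left_comm] using this
  rw [hfun] at hL
  have heq := hL.unique hR
  have hexp : Complex.exp (K * ((y : ℝ) : ℂ)) = Complex.exp (K * (y : ℂ)) := rfl
  have hpt : ((x, y) : ℝ × ℝ) + ((m : ℝ), (n : ℝ)) = ((x + m : ℝ), (y + n : ℝ)) := rfl
  constructor
  · have h10 := congrArg (fun L : (ℝ × ℝ) →L[ℝ] ℂ => L (1, 0)) heq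
    simp only [ContinuousLinearMap.add_apply, ContinuousLinearMap.smul_apply,
      ContinuousLinearMap.comp_apply, ContinuousLinearMap.coe_fst',
      ContinuousLinearMap.coe_snd'] at h10
    have h10' : fderiv ℝ φ ((x + m : ℝ), (y + n : ℝ)) (1, 0)
        = Complex.exp (K * (y : ℂ)) * fderiv ℝ φ (x, y) (1, 0) := by
      rw [← hpt]
      simpa [smul_eq_mul] using h10
    simpa [pdx] using h10'
  · have h01 := congrArg (fun L : (ℝ × ℝ) →L[ℝ] ℂ => L (0, 1)) heq
    simp only [ContinuousLinearMap.add_apply, ContinuousLinearMap.smul_apply,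
      ContinuousLinearMap.comp_apply, ContinuousLinearMap.coe_fst',
      ContinuousLinearMap.coe_snd'] at h01
    have h01' : fderiv ℝ φ ((x + m : ℝ), (y + n : ℝ)) (0, 1)
        = Complex.exp (K * (y : ℂ)) * fderiv ℝ φ (x, y) (0, 1)
          + φ (x, y) * (Complex.exp (K * (y : ℂ)) * K) := by
      rw [← hpt]
      simpa [smul_eq_mul, mul_comm, mul_assoc, mul_left_comm] using h01
    have h2 : pdy φ ((x + m : ℝ), (y + n : ℝ)) = Complex.exp (K * (y : ℂ)) * pdy φ (x, y)
        + φ (x, y) * (Complex.exp (K * (y : ℂ)) * K) := h01'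
    rw [h2]
    ring

/-- `X̂`, `Ŷ` preserve sections of `L_N` and satisfy the Heisenberg relation
`[X̂, Ŷ] = −N/(2πi)`, providing a representation of `h(2)` on sections of `L_N`. -/
theorem heisenberg_representation (N : ℤ) (hN : N ≠ 0) :
    (∀ φ : ℝ × ℝ → ℂ, ContDiff ℝ (⊤ : ℕ∞) φ → QuasiPeriodic N φ →
        QuasiPeriodic N (Xhat N φ) ∧ QuasiPeriodic N (Yhat φ)) ∧
    (∀ φ : ℝ × ℝ → ℂ, ContDiff ℝ (⊤ : ℕ∞) φ →
        ∀ p : ℝ × ℝ,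
          Xhat N (Yhat φ) p - Yhat (Xhat N φ) p =
            -((N : ℂ) / (2 * (Real.pi : ℂ) * Complex.I)) * φ p) := by
  have hπ : ((Real.pi : ℂ)) ≠ 0 := by
    simpa using Real.pi_ne_zero
  have hk : (2 * (Real.pi : ℂ) * Complex.I) ≠ 0 := by
    simp [hπ, Complex.I_ne_zero]
  constructor
  · intro φ hφ hqp
    constructor
    · intro m n x y
      obtain ⟨h1, h2⟩ := qp_deriv N φ hφ hqp m n x y
      have hφv := hqp m n x y
      simp only [Xhat]
      rw [h2, hφv]
      push_cast
      ring
    · intro m n x y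
      obtain ⟨h1, h2⟩ := qp_deriv N φ hφ hqp m n x y
      simp only [Yhat]
      rw [h1]
      ring
  · intro φ hφ p
    set F := fderiv ℝ φ with hF
    set F2 := fderiv ℝ F p with hF2
    have hdφ : Differentiable ℝ φ := hφ.differentiable (by simp)
    have hsymm : F2 (1, 0) (0, 1) = F2 (0, 1) (1, 0) :=
      (hφ.contDiffAt.isSymmSndFDerivAt (by rw [minSmoothness_of_isRCLikeNormedField]; exact WithTop.coe_le_coe.mpr le_top)) _ _
    have hpdx : HasFDerivAt (pdx φ) (F2.flip (1, 0)) p := hasFDerivAt_pd φ hφ p (1, 0)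
    have hpdy : HasFDerivAt (pdy φ) (F2.flip (0, 1)) p := hasFDerivAt_pd φ hφ p (0, 1)
    -- pdy (Yhat φ) p
    have hYd : pdy (Yhat φ) p
        = -(1 / (2 * (Real.pi : ℂ) * Complex.I)) * F2 (0, 1) (1, 0) := by
      have h : HasFDerivAt (Yhat φ)
          ((-(1 / (2 * (Real.pi : ℂ) * Complex.I))) • F2.flip (1, 0)) p := by
        exact hpdx.const_mul _
      have hfd := h.fderiv
      simp only [pdy, hfd, ContinuousLinearMap.smul_apply, ContinuousLinearMap.flip_apply,
        smul_eq_mul]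
    -- pdx (Xhat N φ) p
    have hXd : pdx (Xhat N φ) p
        = (1 / (2 * (Real.pi : ℂ) * Complex.I)) * (F2 (1, 0) (0, 1)
          - 2 * (Real.pi : ℂ) * Complex.I * (N : ℂ) * (φ p + (p.1 : ℂ) * pdx φ p)) := by
      have hxφ : HasFDerivAt (fun q : ℝ × ℝ => (q.1 : ℂ) * φ q)
          ((p.1 : ℂ) • F p + φ p • (Complex.ofRealCLM.comp (ContinuousLinearMap.fst ℝ ℝ ℝ))) p :=
        (hasFDerivAt_coord1 p).mul (hdφ p).hasFDerivAt
      have hin : HasFDerivAt (fun q => pdy φ q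
            - 2 * (Real.pi : ℂ) * Complex.I * (N : ℂ) * (q.1 : ℂ) * φ q)
          (F2.flip (0, 1) - (2 * (Real.pi : ℂ) * Complex.I * (N : ℂ)) •
            ((p.1 : ℂ) • F p +
              φ p • (Complex.ofRealCLM.comp (ContinuousLinearMap.fst ℝ ℝ ℝ)))) p := by
        have h2 := hxφ.const_mul (2 * (Real.pi : ℂ) * Complex.I * (N : ℂ))
        have := hpdy.sub h2
        have e : (fun q : ℝ × ℝ => pdy φ q
              - 2 * (Real.pi : ℂ) * Complex.I * (N : ℂ) * (q.1 : ℂ) * φ q)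
            = fun q => pdy φ q
              - (2 * (Real.pi : ℂ) * Complex.I * (N : ℂ)) * ((q.1 : ℂ) * φ q) := by
          funext q
          ring
        rw [e]
        exact this
      have h : HasFDerivAt (Xhat N φ)
          ((1 / (2 * (Real.pi : ℂ) * Complex.I)) •
            (F2.flip (0, 1) - (2 * (Real.pi : ℂ) * Complex.I * (N : ℂ)) •
              ((p.1 : ℂ) • F p +
                φ p • (Complex.ofRealCLM.comp (ContinuousLinearMap.fst ℝ ℝ ℝ))))) p := by
        exact hin.const_mul _
      have hfd := h.fderiv
      have hpdx_eq : pdx φ p = F p (1, 0) := rfl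
      simp only [pdx, hfd, ContinuousLinearMap.smul_apply, ContinuousLinearMap.sub_apply,
        ContinuousLinearMap.add_apply, ContinuousLinearMap.flip_apply,
        ContinuousLinearMap.comp_apply, ContinuousLinearMap.coe_fst', smul_eq_mul,
        Complex.ofRealCLM_apply, Complex.ofReal_one]
      rw [← hpdx_eq]
      push_cast
      ring
    -- assemble
    have e1 : Xhat N (Yhat φ) p
        = (1 / (2 * (Real.pi : ℂ) * Complex.I)) *
            (pdy (Yhat φ) p - 2 * (Real.pi : ℂ) * Complex.I * (N : ℂ) * (p.1 : ℂ) *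
              (-(1 / (2 * (Real.pi : ℂ) * Complex.I)) * pdx φ p)) := rfl
    have e2 : Yhat (Xhat N φ) p
        = -(1 / (2 * (Real.pi : ℂ) * Complex.I)) * pdx (Xhat N φ) p := rfl
    rw [e1, e2, hYd, hXd, hsymm]
    field_simp
    ring
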